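/- Let C be a linear code of length n over F_q and 0 ≤ k < e where q = p^e. Define C^{p^{e-k}} = {(a_1^{p^{e-k}}, ..., a_n^{p^{e-k}}) : (a_1,...,a_n) ∈ C}. Then the Euclidean dual of C^{p^{e-k}} equals the k-Galois dual of C, i.e., (C^{p^{e-k}})^⊥ = C^{⊥_k}; moreover C^{p^{e-k}} is a linear code with the same dimension and the same minimum Hamming distance as C. -/

import Mathlib

open Finset

/-- The `k`-Galois dual of a linear code `C ⊆ F_q^n`, where `q = p^e`:
`C^{⊥_k} = {x | ∀ c ∈ C, ∑ i, c i * (x i)^(p^k) = 0}`. -/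
def galoisDual (p k : ℕ) [Fact p.Prime] {F : Type*} [Field F] [CharP F p] {n : ℕ}
    (C : Submodule F (Fin n → F)) : Submodule F (Fin n → F) where
  carrier := {x | ∀ c ∈ C, ∑ i, c i * x i ^ p ^ k = 0}
  zero_mem' := fun c _ => by
    simp [zero_pow (pow_pos (Nat.Prime.pos (Fact.out : p.Prime)) k).ne']
  add_mem' := by
    intro x y hx hy c hc
    have hpow : ∀ i : Fin n, (x + y) i ^ p ^ k = x i ^ p ^ k + y i ^ p ^ k := fun i => by
      simpa using add_pow_char_pow (x i) (y i) p k
    calc ∑ i, c i * (x + y) i ^ p ^ k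
        = ∑ i, (c i * x i ^ p ^ k + c i * y i ^ p ^ k) := by
          refine Finset.sum_congr rfl fun i _ => by rw [hpow i, mul_add]
      _ = 0 := by
          rw [Finset.sum_add_distrib, hx c hc, hy c hc, add_zero]
  smul_mem' := by
    intro a x hx c hc
    calc ∑ i, c i * (a • x) i ^ p ^ k
        = a ^ p ^ k * ∑ i, c i * x i ^ p ^ k := by
          rw [Finset.mul_sum]
          refine Finset.sum_congr rfl fun i _ => by
            simp only [Pi.smul_apply, smul_eq_mul, mul_pow]; ring
      _ = 0 := by rw [hx c hc, mul_zero]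

/-- A linear code `C` is a `k`-Galois LCD code if `C ∩ C^{⊥_k} = {0}`. -/
def IsGaloisLCD (p k : ℕ) [Fact p.Prime] {F : Type*} [Field F] [CharP F p] {n : ℕ}
    (C : Submodule F (Fin n → F)) : Prop :=
  C ⊓ galoisDual p k C = ⊥

/-- `C` has minimum Hamming distance `d`. -/
def IsMinDist {F : Type*} [Field F] [DecidableEq F] {n : ℕ}
    (C : Submodule F (Fin n → F)) (d : ℕ) : Prop :=
  (∃ x ∈ C, x ≠ 0 ∧ hammingNorm x = d) ∧ ∀ x ∈ C, x ≠ 0 → d ≤ hammingNorm x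

/-- `C` is an MDS code: the trivial code `{0}` counts as MDS, otherwise
the minimum distance is `n - dim C + 1`. -/
def IsMDS {F : Type*} [Field F] [DecidableEq F] {n : ℕ} (C : Submodule F (Fin n → F)) : Prop :=
  C = ⊥ ∨ IsMinDist C (n - Module.finrank F C + 1)

/-- `C` is `λ`-constacyclic: `(λ c_n, c_1, …, c_{n-1}) ∈ C` whenever `(c_1, …, c_n) ∈ C`. -/
def IsConstacyclic {F : Type*} [Field F] {n : ℕ} (lam : F) (C : Submodule F (Fin n → F)) : Prop :=
  ∀ c ∈ C, (fun i : Fin n => if (i : ℕ) = 0 then lam * c ⟨n - 1, by have := i.isLt; omega⟩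
    else c ⟨(i : ℕ) - 1, by have := i.isLt; omega⟩) ∈ C

/-- The Euclidean dual of a linear code. -/
def euclideanDual {F : Type*} [Field F] {n : ℕ}
    (C : Submodule F (Fin n → F)) : Submodule F (Fin n → F) where
  carrier := {x | ∀ c ∈ C, ∑ i, c i * x i = 0}
  zero_mem' := fun c _ => by simp
  add_mem' := by
    intro x y hx hy c hc
    calc ∑ i, c i * (x + y) i = ∑ i, (c i * x i + c i * y i) := by
          refine Finset.sum_congr rfl fun i _ => by simp [mul_add]
      _ = 0 := by rw [Finset.sum_add_distrib, hx c hc, hy c hc, add_zero]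
  smul_mem' := by
    intro a x hx c hc
    calc ∑ i, c i * (a • x) i = a * ∑ i, c i * x i := by
          rw [Finset.mul_sum]
          refine Finset.sum_congr rfl fun i _ => by
            simp only [Pi.smul_apply, smul_eq_mul]; ring
      _ = 0 := by rw [hx c hc, mul_zero]

/-- The coordinatewise `p^m`-power map `x ↦ (x_i^{p^m})_i`, as a semilinear map
with respect to the iterated Frobenius. -/
def frobPowMap (p m : ℕ) [Fact p.Prime] (F : Type*) [Field F] [CharP F p] (n : ℕ) :
    (Fin n → F) →ₛₗ[iterateFrobenius F p m] (Fin n → F) where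
  toFun x := fun i => x i ^ p ^ m
  map_add' x y := funext fun i => by simpa using add_pow_char_pow (x i) (y i) p m
  map_smul' a x := funext fun i => by
    simp [iterateFrobenius_def, mul_pow]

/-- On a finite field, the iterated Frobenius is surjective. -/
instance (p m : ℕ) [Fact p.Prime] (F : Type*) [Field F] [Finite F] [CharP F p] :
    RingHomSurjective (iterateFrobenius F p m) :=
  ⟨Finite.injective_iff_surjective.mp (iterateFrobenius F p m).injective⟩

/-! Over `F_q` with `q = p^e`, raising to the power `p^(e-k)` undoes raising to the power `p^k`,
so `∑ cᵢ^(p^(e-k)) xᵢ = (∑ cᵢ xᵢ^(p^k))^(p^(e-k))`; since the Frobenius power is injective, the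
left side vanishes exactly when the right one does. The same injectivity makes the coordinatewise
power map an injective, weight-preserving semilinear map over a field automorphism, which preserves
dimension and minimum distance. -/

open Function

theorem Submodule.finrank_map_of_injective {K V W : Type*} [Field K] [AddCommGroup V]
    [Module K V] [AddCommGroup W] [Module K W] {σ : K →+* K} [RingHomSurjective σ]
    (f : V →ₛₗ[σ] W) (hf : Injective f) (C : Submodule K V) :
    Module.finrank K (C.map f) = Module.finrank K C := by
  let j : C ≃+ C.map f :=
    { Equiv.Set.image f C hf with map_add' := fun _ _ => Subtype.ext (map_add f _ _) }
  have := lift_rank_eq_of_equiv_equiv σ j ⟨σ.injective, σ.surjective⟩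
    fun r m => Subtype.ext (map_smulₛₗ f r (m : V))
  simpa [Module.finrank] using (congrArg Cardinal.toNat this).symm

theorem isMinDist_map_iff {F : Type*} [Field F] [DecidableEq F] {n m : ℕ} {σ : F →+* F}
    [RingHomSurjective σ] (f : (Fin n → F) →ₛₗ[σ] (Fin m → F)) (hf : Injective f)
    (hw : ∀ x, hammingNorm (f x) = hammingNorm x) (C : Submodule F (Fin n → F)) (d : ℕ) :
    IsMinDist (C.map f) d ↔ IsMinDist C d := by
  simp only [IsMinDist, Submodule.mem_map, ne_eq, exists_exists_and_eq_and,
    forall_exists_index, and_imp, forall_apply_eq_imp_iff₂, hw,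
    LinearMap.map_eq_zero_iff f hf]

theorem pow_pow_pow_sub_eq_self {F : Type*} [Field F] [Fintype F] {p e k : ℕ}
    (hF : Fintype.card F = p ^ e) (hk : k ≤ e) (x : F) :
    (x ^ p ^ k) ^ p ^ (e - k) = x := by
  rw [← pow_mul, ← pow_add, Nat.add_sub_cancel' hk, ← hF, FiniteField.pow_card]

section frobPowMap

variable {p : ℕ} [Fact p.Prime] {F : Type*} [Field F] [CharP F p] {n : ℕ}

@[simp]
theorem frobPowMap_apply (m : ℕ) (x : Fin n → F) (i : Fin n) :
    frobPowMap p m F n x i = x i ^ p ^ m :=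
  rfl

theorem frobPowMap_injective (m : ℕ) : Injective (frobPowMap p m F n) :=
  fun _ _ h => funext fun i => (iterateFrobenius F p m).injective (congrFun h i)

theorem hammingNorm_frobPowMap [DecidableEq F] (m : ℕ) (x : Fin n → F) :
    hammingNorm (frobPowMap p m F n x) = hammingNorm x :=
  hammingNorm_comp (fun _ => iterateFrobenius F p m) (fun _ => RingHom.injective _)
    fun _ => map_zero _

variable [Fintype F] {e k : ℕ}

theorem sum_frobPowMap_mul (hF : Fintype.card F = p ^ e) (hk : k ≤ e) (c x : Fin n → F) :
    ∑ i, frobPowMap p (e - k) F n c i * x i = (∑ i, c i * x i ^ p ^ k) ^ p ^ (e - k) := by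
  simp only [sum_pow_char_pow, mul_pow, pow_pow_pow_sub_eq_self hF hk, frobPowMap_apply]

theorem euclideanDual_map_frobPowMap (hF : Fintype.card F = p ^ e) (hk : k ≤ e)
    (C : Submodule F (Fin n → F)) :
    euclideanDual (C.map (frobPowMap p (e - k) F n)) = galoisDual p k C := by
  ext x
  change (∀ y ∈ C.map _, _) ↔ ∀ c ∈ C, _
  simp only [Submodule.mem_map, forall_exists_index, and_imp, forall_apply_eq_imp_iff₂,
    sum_frobPowMap_mul hF hk, pow_eq_zero_iff (pow_ne_zero _ (Fact.out : p.Prime).ne_zero)]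

end frobPowMap

/-- For a linear code `C` of length `n` over `F_q` (`q = p^e`, `0 ≤ k < e`), the code
`C^{p^{e-k}}` (the image of `C` under the coordinatewise `p^{e-k}`-th power map) satisfies
`(C^{p^{e-k}})^⊥ = C^{⊥_k}`; moreover `C^{p^{e-k}}` is a linear code with the same
dimension and the same minimum Hamming distance as `C`. -/
theorem euclideanDual_frobPow_eq_galoisDual
    (p e k : ℕ) [Fact p.Prime] (hk : k < e)
    (F : Type*) [Field F] [Fintype F] [DecidableEq F] [CharP F p]
    (hF : Fintype.card F = p ^ e)
    {n : ℕ} (C : Submodule F (Fin n → F)) :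
    euclideanDual (C.map (frobPowMap p (e - k) F n)) = galoisDual p k C ∧
    Module.finrank F (C.map (frobPowMap p (e - k) F n)) = Module.finrank F C ∧
    (∀ d : ℕ, IsMinDist (C.map (frobPowMap p (e - k) F n)) d ↔ IsMinDist C d) :=
  ⟨euclideanDual_map_frobPowMap hF hk.le C,
    Submodule.finrank_map_of_injective _ (frobPowMap_injective _) C,
    isMinDist_map_iff _ (frobPowMap_injective _) (hammingNorm_frobPowMap _) C⟩
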